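/- arXiv:1811.04552 — 3 statements merged into one kernel-verified Lean document; each statement's English description precedes it below -/
import Mathlib

section
/- Let n ≥ 2, let p_1, …, p_n ∈ ℝ², let ε ≥ 0, and let i, j be indices with 1 ≤ i < j < n. Let x be a point on the segment [p_i, p_{i+1}] and y a point on the segment [p_j, p_{j+1}], and let C = [x, p_{i+1}] ∪ (⋃_{i+1 ≤ k ≤ j−1} [p_k, p_{k+1}]) ∪ [p_j, y] be the sub-curve of P from x to y. Then every point of C is within Euclidean distance ε of the segment [x, y] (i.e., the directed Hausdorff distance from C to [x, y] is at most ε) if and only if for every index k with i < k ≤ j the point p_k lies in the closed ε-thickening of the segment [x, y] (the set of points at distance at most ε from [x, y]). -/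
open Metric

lemma seg_infDist_le {E : Type*} [NormedAddCommGroup E] [NormedSpace ℝ E]
    {S : Set E} (hS : Convex ℝ S) (hne : S.Nonempty) {a b : E} {ε : ℝ}
    (ha : infDist a S ≤ ε) (hb : infDist b S ≤ ε) {z : E}
    (hz : z ∈ segment ℝ a b) : infDist z S ≤ ε := by
  obtain ⟨u, v, hu, hv, huv, rfl⟩ := hz
  refine le_of_forall_pos_le_add fun δ hδ => ?_
  obtain ⟨a', ha', hda⟩ := (infDist_lt_iff hne).1
    (ha.trans_lt (lt_add_of_pos_right ε hδ))
  obtain ⟨b', hb', hdb⟩ := (infDist_lt_iff hne).1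
    (hb.trans_lt (lt_add_of_pos_right ε hδ))
  have hmem : u • a' + v • b' ∈ S := hS ha' hb' hu hv huv
  have key : dist (u • a + v • b) (u • a' + v • b') ≤ u * dist a a' + v * dist b b' := by
    have : (u • a + v • b) - (u • a' + v • b') = u • (a - a') + v • (b - b') := by
      module
    rw [dist_eq_norm, this]
    calc ‖u • (a - a') + v • (b - b')‖ ≤ ‖u • (a - a')‖ + ‖v • (b - b')‖ := norm_add_le _ _
      _ = u * ‖a - a'‖ + v * ‖b - b'‖ := by
          rw [norm_smul, norm_smul, Real.norm_of_nonneg hu, Real.norm_of_nonneg hv]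
      _ = u * dist a a' + v * dist b b' := by rw [dist_eq_norm, dist_eq_norm]
  calc infDist (u • a + v • b) S ≤ dist (u • a + v • b) (u • a' + v • b') :=
        infDist_le_dist_of_mem hmem
    _ ≤ u * dist a a' + v * dist b b' := key
    _ ≤ u * (ε + δ) + v * (ε + δ) := by
        have h1 : u * dist a a' ≤ u * (ε + δ) := mul_le_mul_of_nonneg_left hda.le hu
        have h2 : v * dist b b' ≤ v * (ε + δ) := mul_le_mul_of_nonneg_left hdb.le hv
        linarith
    _ = ε + δ := by rw [← add_mul, huv, one_mul]

theorem link_iff_vertices_in_neighbourhood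
    (n : ℕ) (hn : 2 ≤ n) (p : ℕ → EuclideanSpace ℝ (Fin 2)) (ε : ℝ) (hε : 0 ≤ ε)
    (i j : ℕ) (hi : 1 ≤ i) (hij : i < j) (hj : j < n)
    (x y : EuclideanSpace ℝ (Fin 2))
    (hx : x ∈ segment ℝ (p i) (p (i + 1)))
    (hy : y ∈ segment ℝ (p j) (p (j + 1))) :
    (∀ z ∈ segment ℝ x (p (i + 1)) ∪
        (⋃ k ∈ Set.Icc (i + 1) (j - 1), segment ℝ (p k) (p (k + 1))) ∪
        segment ℝ (p j) y,
      Metric.infDist z (segment ℝ x y) ≤ ε) ↔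
    (∀ k, i < k → k ≤ j →
      Metric.infDist (p k) (segment ℝ x y) ≤ ε) := by
  have hne : (segment ℝ x y).Nonempty := ⟨x, left_mem_segment ℝ x y⟩
  have hconv : Convex ℝ (segment ℝ x y) := convex_segment x y
  have hxS : infDist x (segment ℝ x y) ≤ ε := by
    rw [infDist_zero_of_mem (left_mem_segment ℝ x y)]; exact hε
  have hyS : infDist y (segment ℝ x y) ≤ ε := by
    rw [infDist_zero_of_mem (right_mem_segment ℝ x y)]; exact hε
  constructor
  · intro h k hik hkj
    rcases eq_or_lt_of_le hkj with rfl | hkj'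
    · exact h _ (Or.inr (left_mem_segment ℝ (p k) y))
    rcases eq_or_lt_of_le (Nat.succ_le_of_lt hik) with hk | hk
    · exact h _ (Or.inl (Or.inl (hk ▸ right_mem_segment ℝ x (p (i + 1)))))
    · refine h _ (Or.inl (Or.inr ?_))
      refine Set.mem_biUnion (s := Set.Icc (i+1) (j-1)) ⟨le_of_lt hk, ?_⟩
        (left_mem_segment ℝ (p k) (p (k + 1)))
      omega
  · intro h z hz
    rcases hz with (hz | hz) | hz
    · exact seg_infDist_le hconv hne hxS (h (i + 1) (Nat.lt_succ_self i) hij) hz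
    · obtain ⟨k, hk, hzk⟩ := Set.mem_iUnion₂.1 hz
      obtain ⟨hka, hkb⟩ := hk
      have hk1 : i < k := by omega
      have hk2 : k ≤ j := by omega
      have hk3 : i < k + 1 := by omega
      have hk4 : k + 1 ≤ j := by omega
      exact seg_infDist_le hconv hne (h k hk1 hk2) (h (k + 1) hk3 hk4) hzk
    · exact seg_infDist_le hconv hne (h j hij (le_refl j)) hyS hz
end

section
/- Let P = ⟨p_1, …, p_n⟩ be a polygonal curve in ℝ² (n ≥ 2), let ε ≥ 0, and let D = ⟨p′_1 p′_2, p′_3 p′_4, …, p′_{2k−1} p′_{2k}⟩ be a disjoint link chain (DLC) for P with p′_1 = p_1. Then the sequence of points q_0 = p′_1, q_1 = p′_2, q_2 = p′_3, …, q_{2k−1} = p′_{2k}, q_{2k} = p_n, obtained by connecting the end of each link of D to the start of the next link and connecting the end of the last link to p_n, is a curve-restricted simplification of P with 2k links. -/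
/-!
Framework: a point of the polygonal curve `P = ⟨p 1, …, p n⟩` is a pair
`(k, t)` with `1 ≤ k < n` and `t ∈ [0, 1]`, representing the point
`(1 - t) • p k + t • p (k + 1)` of edge `[p k, p (k + 1)]`; points of `P`
are ordered lexicographically (the order along `P`).
-/

/-- The point of the plane represented by the curve point `(k, t)`. -/
noncomputable def ptVal (p : ℕ → EuclideanSpace ℝ (Fin 2)) (a : ℕ × ℝ) :
    EuclideanSpace ℝ (Fin 2) :=
  (1 - a.2) • p a.1 + a.2 • p (a.1 + 1)

/-- `a = (k, t)` is a point of the polygonal curve with vertices `p 1, …, p n`. -/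
def IsPtOn (n : ℕ) (a : ℕ × ℝ) : Prop :=
  1 ≤ a.1 ∧ a.1 < n ∧ a.2 ∈ Set.Icc (0 : ℝ) 1

/-- The order of the points along the curve (lexicographic on `(k, t)`). -/
def PtLE (a b : ℕ × ℝ) : Prop :=
  a.1 < b.1 ∨ (a.1 = b.1 ∧ a.2 ≤ b.2)

/-- The segment from the curve point `a` (on edge `a.1`) to the curve point `b`
(on edge `b.1`), with `a` not after `b` along the curve, is a valid link:
it intersects the closed `ε`-ball around `p k` for every `a.1 < k ≤ b.1`. -/
def IsValidLink (p : ℕ → EuclideanSpace ℝ (Fin 2)) (ε : ℝ) (a b : ℕ × ℝ) : Prop :=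
  PtLE a b ∧
  ∀ k, a.1 < k → k ≤ b.1 →
    (segment ℝ (ptVal p a) (ptVal p b) ∩ Metric.closedBall (p k) ε).Nonempty

/-- `D 1, D 2, …, D (2 * k)` are the endpoints of a disjoint link chain (DLC)
with `k` links (the links are `[D 1, D 2], [D 3, D 4], …`) for the curve
`⟨p 1, …, p n⟩` with error bound `ε`. -/
def IsDLC (n : ℕ) (p : ℕ → EuclideanSpace ℝ (Fin 2)) (ε : ℝ) (k : ℕ)
    (D : ℕ → ℕ × ℝ) : Prop :=
  1 ≤ k ∧
  (∀ m, 1 ≤ m → m ≤ 2 * k → IsPtOn n (D m)) ∧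
  (D 1).1 = 1 ∧
  (D (2 * k)).1 = n - 1 ∧
  (∀ i, 1 ≤ i → i ≤ k → IsValidLink p ε (D (2 * i - 1)) (D (2 * i))) ∧
  (∀ i, 1 ≤ i → i < k → (D (2 * i)).1 = (D (2 * i + 1)).1) ∧
  (∀ m, 1 ≤ m → m < 2 * k → PtLE (D m) (D (m + 1)))

/-- `q 0, q 1, …, q m` is a curve-restricted simplification of the curve
`⟨p 1, …, p n⟩` with `m` links: its points appear in order along the curve,
`q 0` is the point `p 1` of the curve, `q m` is the point `p n` of the curve,
and each segment `[q (t - 1), q t]` is a valid link. -/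
def IsSimplification (n : ℕ) (p : ℕ → EuclideanSpace ℝ (Fin 2)) (ε : ℝ) (m : ℕ)
    (q : ℕ → ℕ × ℝ) : Prop :=
  (∀ t, t ≤ m → IsPtOn n (q t)) ∧
  q 0 = (1, 0) ∧
  q m = (n - 1, 1) ∧
  (∀ t, 1 ≤ t → t ≤ m → IsValidLink p ε (q (t - 1)) (q t)) ∧
  (∀ t, t < m → PtLE (q t) (q (t + 1)))

/-!
STATEMENT 5 (Proposition 4.2 of the paper).
Given a DLC `D` with `k` links for `P` whose first point equals `p 1`, the
sequence `q 0 = D 1, q 1 = D 2, …, q (2k - 1) = D (2k), q (2k) = pₙ`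
(connecting the end of each link to the start of the next link, and the end
of the last link to `p n`) is a curve-restricted simplification of `P`
with `2 * k` links.
-/

theorem dlc_gives_simplification
    (n : ℕ) (hn : 2 ≤ n) (p : ℕ → EuclideanSpace ℝ (Fin 2)) (ε : ℝ) (hε : 0 ≤ ε)
    (k : ℕ) (D : ℕ → ℕ × ℝ)
    (hD : IsDLC n p ε k D) (hfirst : D 1 = (1, 0)) :
    IsSimplification n p ε (2 * k)
      (fun t => if t = 2 * k then ((n - 1 : ℕ), (1 : ℝ)) else D (t + 1)) := by
  obtain ⟨hk, hpt, hD1, hD2k, hlink, hsame, horder⟩ := hD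
  refine ⟨?_, ?_, ?_, ?_, ?_⟩
  · intro t ht
    by_cases h : t = 2 * k
    · show IsPtOn n (if t = 2 * k then ((n - 1 : ℕ), (1 : ℝ)) else D (t + 1))
      rw [if_pos h]
      exact ⟨by omega, by omega, by norm_num⟩
    · simp only [if_neg h]
      exact hpt (t + 1) (by omega) (by omega)
  · have h0 : (0 : ℕ) ≠ 2 * k := by omega
    simp only [if_neg h0, zero_add, hfirst]
  · simp
  · intro t ht1 ht2
    have hq1 : (fun t => if t = 2 * k then ((n - 1 : ℕ), (1 : ℝ)) else D (t + 1)) (t - 1)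
        = D t := by
      have h1 : t - 1 ≠ 2 * k := by omega
      simp only [if_neg h1]
      congr 1
      omega
    simp only [hq1]
    by_cases h : t = 2 * k
    · rw [if_pos h]
      have hDt : (D t).1 = n - 1 := by rw [h]; exact hD2k
      refine ⟨Or.inr ⟨hDt, (hpt t (by omega) (by omega)).2.2.2⟩, ?_⟩
      intro k' hk1 hk2
      exfalso
      rw [hDt] at hk1
      simp only at hk2
      omega
    · rw [if_neg h]
      rcases Nat.even_or_odd t with he | ho
      · -- even t = 2i: same edge, use order
        obtain ⟨i, hi⟩ := he
        have hi1 : 1 ≤ i := by omega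
        have hik : i < k := by omega
        have hedge : (D t).1 = (D (t + 1)).1 := by
          have := hsame i hi1 hik
          have ht' : t = 2 * i := by omega
          rw [ht']; exact this
        refine ⟨horder t ht1 (by omega), ?_⟩
        intro k' hk1 hk2
        exfalso
        omega
      · obtain ⟨i, hi⟩ := ho
        have h1 : 1 ≤ i + 1 := by omega
        have h2 : i + 1 ≤ k := by omega
        have := hlink (i + 1) h1 h2
        have e1 : 2 * (i + 1) - 1 = t := by omega
        have e2 : 2 * (i + 1) = t + 1 := by omega
        rwa [e1, e2] at this
  · intro t ht
    show PtLE (if t = 2 * k then ((n - 1 : ℕ), (1 : ℝ)) else D (t + 1))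
      (if t + 1 = 2 * k then ((n - 1 : ℕ), (1 : ℝ)) else D (t + 1 + 1))
    by_cases h : t + 1 = 2 * k
    · rw [if_pos h, if_neg (show t ≠ 2 * k by omega)]
      have hDt : (D (t + 1)).1 = n - 1 := by rw [h]; exact hD2k
      exact Or.inr ⟨hDt, (hpt (t + 1) (by omega) (by omega)).2.2.2⟩
    · rw [if_neg h, if_neg (show t ≠ 2 * k by omega)]
      exact horder (t + 1) (by omega) (by omega)
end

section
/- Let P = ⟨p_1, …, p_n⟩ be a polygonal curve in ℝ² (n ≥ 2) and let ε ≥ 0. Suppose P admits at least one curve-restricted simplification, let x be the minimum number of links over all curve-restricted simplifications of P, and let k be the minimum number of links over all disjoint link chains (DLCs) for P whose first point p′_1 equals p_1. Then k ≤ x, P admits a curve-restricted simplification with 2k links, and 2k ≤ 2x; that is, the simplification obtained from a minimum-size DLC has at most twice as many links as an optimal curve-restricted simplification of P. -/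
/-!
STATEMENT 7 (Theorem 4.6 of the paper).
If `x` is the minimum number of links over all curve-restricted
simplifications of `P` and `k` is the minimum number of links over all DLCs
of `P` whose first point equals `p 1`, then `k ≤ x`, `P` admits a
curve-restricted simplification with `2 * k` links, and `2 * k ≤ 2 * x`.
-/


lemma valid_same_edge (p : ℕ → EuclideanSpace ℝ (Fin 2)) (ε : ℝ) {a b : ℕ × ℝ}
    (h1 : a.1 = b.1) (h2 : a.2 ≤ b.2) : IsValidLink p ε a b :=
  ⟨Or.inr ⟨h1, h2⟩, fun k hk1 hk2 => by omega⟩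

lemma ptle_refl (a : ℕ × ℝ) : PtLE a a := Or.inr ⟨rfl, le_rfl⟩

theorem approximation_guarantee
    (n : ℕ) (hn : 2 ≤ n) (p : ℕ → EuclideanSpace ℝ (Fin 2)) (ε : ℝ) (hε : 0 ≤ ε)
    (hadmits : ∃ m q, IsSimplification n p ε m q)
    (x k : ℕ)
    (hx : IsLeast {m | ∃ q, IsSimplification n p ε m q} x)
    (hk : IsLeast {k' | ∃ D, IsDLC n p ε k' D ∧ D 1 = (1, 0)} k) :
    k ≤ x ∧ (∃ q, IsSimplification n p ε (2 * k) q) ∧ 2 * k ≤ 2 * x := by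
  -- Step 1: k ≤ x, by turning an optimal simplification into a DLC.
  obtain ⟨⟨q, hq⟩, hxlb⟩ := hx
  obtain ⟨hqpt, hq0, hqx, hqlink, hqord⟩ := hq
  have hx1 : 1 ≤ x := by
    by_contra h
    have hx0 : x = 0 := by omega
    rw [hx0] at hqx
    rw [hq0] at hqx
    have := congrArg Prod.snd hqx
    simp at this
  have hkx : k ≤ x := by
    apply hk.2
    refine ⟨fun m => q (m / 2), ?_, ?_⟩
    · refine ⟨hx1, ?_, ?_, ?_, ?_, ?_, ?_⟩
      · intro m hm1 hm2
        exact hqpt _ (by omega)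
      · simpa using hq0 ▸ rfl
      · show (q (2 * x / 2)).1 = n - 1
        have : 2 * x / 2 = x := by omega
        rw [this, hqx]
      · intro i hi1 hi2
        show IsValidLink p ε (q ((2 * i - 1) / 2)) (q (2 * i / 2))
        have e1 : (2 * i - 1) / 2 = i - 1 := by omega
        have e2 : 2 * i / 2 = i := by omega
        rw [e1, e2]
        exact hqlink i hi1 hi2
      · intro i hi1 hi2
        show (q (2 * i / 2)).1 = (q ((2 * i + 1) / 2)).1
        have : 2 * i / 2 = (2 * i + 1) / 2 := by omega
        rw [this]
      · intro m hm1 hm2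
        show PtLE (q (m / 2)) (q ((m + 1) / 2))
        rcases Nat.even_or_odd m with he | ho
        · have : m / 2 = (m + 1) / 2 := by
            obtain ⟨c, hc⟩ := he; omega
          rw [this]; exact ptle_refl _
        · have e : (m + 1) / 2 = m / 2 + 1 := by
            obtain ⟨c, hc⟩ := ho; omega
          rw [e]
          refine hqord (m / 2) ?_
          obtain ⟨c, hc⟩ := ho; omega
    · show q (1 / 2) = (1, 0)
      simpa using hq0
  refine ⟨hkx, ?_, by omega⟩
  -- Step 2: turn the optimal DLC into a simplification with 2k links.
  obtain ⟨D, ⟨hk1, hDpt, hD1, hDlast, hDlink, hDedge, hDord⟩, hD1eq⟩ := hk.1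
  refine ⟨fun t => if 2 * k ≤ t then ((n - 1 : ℕ), (1 : ℝ)) else D (t + 1), ?_, ?_, ?_, ?_, ?_⟩
  · intro t ht
    by_cases h : 2 * k ≤ t
    · simp only [h, if_pos]
      exact ⟨by omega, by omega, by norm_num⟩
    · simp only [h, if_neg, if_false]
      exact hDpt (t + 1) (by omega) (by omega)
  · have h0 : ¬ (2 * k ≤ 0) := by omega
    simp only [h0, if_false]
    exact hD1eq
  · simp
  · intro t ht1 ht2
    have ht1' : ¬ (2 * k ≤ t - 1) := by omega
    simp only [ht1', if_false]
    have e : t - 1 + 1 = t := by omega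
    rw [e]
    by_cases h : 2 * k ≤ t
    · -- t = 2k : final half-edge link
      have ht : t = 2 * k := by omega
      simp only [h, if_pos]
      have hedge : (D t).1 = n - 1 := by rw [ht]; exact hDlast
      have hpt : IsPtOn n (D t) := hDpt t (by omega) (by omega)
      exact valid_same_edge p ε hedge hpt.2.2.2
    · simp only [h, if_false]
      rcases Nat.even_or_odd t with he | ho
      · -- same-edge link D(2i) to D(2i+1)
        obtain ⟨i, hi⟩ := he
        have hedge : (D t).1 = (D (t + 1)).1 := by
          have := hDedge i (by omega) (by omega)
          have e1 : 2 * i = t := by omega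
          rw [e1] at this
          exact this
        have hord := hDord t (by omega) (by omega)
        rcases hord with h' | h'
        · omega
        · exact valid_same_edge p ε hedge h'.2
      · -- actual DLC link
        obtain ⟨i, hi⟩ : ∃ i, t = 2 * i - 1 ∧ 1 ≤ i ∧ i ≤ k := by
          refine ⟨(t + 1) / 2, ?_⟩
          obtain ⟨c, hc⟩ := ho
          omega
        have := hDlink i hi.2.1 hi.2.2
        have e1 : 2 * i - 1 = t := by omega
        have e2 : 2 * i = t + 1 := by omega
        rw [e1, e2] at this
        exact this
  · intro t ht
    have h1 : ¬ (2 * k ≤ t) := by omega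
    simp only [h1, if_false]
    by_cases h : 2 * k ≤ t + 1
    · have ht' : t + 1 = 2 * k := by omega
      simp only [h, if_pos]
      have hedge : (D (t + 1)).1 = n - 1 := by rw [ht']; exact hDlast
      have hpt := hDpt (t + 1) (by omega) (by omega)
      exact Or.inr ⟨hedge, hpt.2.2.2⟩
    · simp only [h, if_false]
      exact hDord (t + 1) (by omega) (by omega)
end
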